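/- Let R be a unital non-associative ring, G a monoid, π a G-derivation on R, and S = R[G;π] the Ore monoid ring. Define Z(S)^G = {s ∈ Z(S) : for all a,b ∈ G, π̃^a_b(s) = s if a = b and π̃^a_b(s) = 0 otherwise}. If S is G-simple and for all a,b ∈ G the extended map π̃^a_b is right Z(S)^G-linear (or, for all a,b ∈ G, π̃^a_b is left Z(S)^G-linear), then Z(S)^G is a field, i.e. a commutative unital ring in which every nonzero element has a multiplicative inverse. -/

import Mathlib

open scoped Classical

/-! Common framework: Ore monoid rings `R[G;π]` over a unital non-associative ring `R`
and a monoid `G`.  A `G`-derivation `π = {π^a_b}` is encoded as a map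
`π : G → R → (G →₀ R)`, where `π a r b = π^a_b(r)`; axiom (D0) (finite support in `b`)
is built into the `Finsupp` encoding.  The Ore monoid ring `S = R[G;π]` is the
additive group `G →₀ R` of finitely supported formal sums `Σ r_a xᵃ`
(with `Finsupp.single a r` representing `r xᵃ`), equipped with the
multiplication `GDeriv.mul` below. -/

/-- A two-sided ideal with respect to a (possibly non-associative, non-unital)
multiplication `m` on an additive group `A`. -/
structure IsIdealWith {A : Type*} [AddCommGroup A] (m : A → A → A) (J : Set A) : Prop where
  zero_mem : (0 : A) ∈ J
  add_mem : ∀ {x y : A}, x ∈ J → y ∈ J → x + y ∈ J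
  neg_mem : ∀ {x : A}, x ∈ J → -x ∈ J
  mul_mem_left : ∀ (r : A) {x : A}, x ∈ J → m r x ∈ J
  mul_mem_right : ∀ {x : A} (r : A), x ∈ J → m x r ∈ J

/-- The subset `F` of `A` is a field with respect to the multiplication `m` with
identity `one`: it is a commutative unital subring in which every nonzero element
has a multiplicative inverse. -/
def IsFieldWith {A : Type*} [AddCommGroup A] (m : A → A → A) (one : A) (F : Set A) : Prop :=
  one ∈ F ∧ (∀ x ∈ F, ∀ y ∈ F, x + y ∈ F) ∧ (∀ x ∈ F, -x ∈ F) ∧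
  (∀ x ∈ F, ∀ y ∈ F, m x y ∈ F) ∧ (∀ x ∈ F, ∀ y ∈ F, m x y = m y x) ∧
  (∀ x ∈ F, x ≠ 0 → ∃ y ∈ F, m x y = one ∧ m y x = one)

/-- A `G`-derivation on `R`: axioms (D0)–(D4).  Here `π a r b` denotes `π^a_b(r)`,
and (D0) holds by the finite support of `π a r : G →₀ R`. -/
structure GDeriv (R : Type*) [NonAssocRing R] (G : Type*) [Monoid G] where
  /-- the family of maps; `π a r b = π^a_b(r)` -/
  π : G → R → (G →₀ R)
  /-- (D1): `π^e_e = id` and `π^e_a = 0` for `a ≠ e` -/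
  d1 : ∀ r : R, π 1 r = Finsupp.single 1 r
  /-- (D2): `π^a_b(1) = δ_{a,b}` -/
  d2 : ∀ a : G, π a (1 : R) = Finsupp.single a (1 : R)
  /-- (D3): each `π^a_b` is additive -/
  d3 : ∀ (a : G) (r s : R), π a (r + s) = π a r + π a s
  /-- (D4): `π^{ab}_c = Σ_{df = c} π^a_d ∘ π^b_f` -/
  d4 : ∀ (a b : G) (r : R),
    π (a * b) r = (π b r).sum fun f s => (π a s).sum fun d t => Finsupp.single (d * f) t

namespace GDeriv

variable {R : Type*} [NonAssocRing R] {G : Type*} [Monoid G] (P : GDeriv R G)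

/-- The multiplication of the Ore monoid ring `S = R[G;π]` on `G →₀ R`:
the biadditive extension of `(r xᵃ)(s xᵇ) = Σ_c r π^a_c(s) x^{cb}`. -/
noncomputable def mul (u v : G →₀ R) : G →₀ R :=
  u.sum fun a r => v.sum fun b s => (P.π a s).sum fun c t => Finsupp.single (c * b) (r * t)

/-- The multiplicative identity `1·xᵉ` of `S`. -/
noncomputable def one (_P : GDeriv R G) : G →₀ R := Finsupp.single 1 1

/-- `R^G = {r ∈ R : π^a_b(r) = δ_{a,b} r}`. -/
def fixed : Set R := {r | ∀ a : G, P.π a r = Finsupp.single a r}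

/-- `S^G = Σ_a R^G xᵃ`, the elements of `S` all of whose coefficients lie in `R^G`. -/
def fixedS : Set (G →₀ R) := {u | ∀ c : G, u c ∈ P.fixed}

/-- (D7): every `π^a_b` is left `R^G`-linear. -/
def LeftLinear : Prop := ∀ a b : G, ∀ s ∈ P.fixed, ∀ r : R, P.π a (s * r) b = s * P.π a r b

/-- (D8): every `π^a_b` is right `R^G`-linear. -/
def RightLinear : Prop := ∀ a b : G, ∀ r : R, ∀ s ∈ P.fixed, P.π a (r * s) b = P.π a r b * s

/-- `π` is strong if (D7) or (D8) holds. -/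
def Strong : Prop := P.LeftLinear ∨ P.RightLinear

/-- (D6): `π^a_a = id_R` for all `a ∈ G` (i.e. `π` is unital). -/
def Unital : Prop := ∀ (a : G) (r : R), P.π a r a = r

/-- `π` is commutative: `π^a_b ∘ π^c_d = π^c_d ∘ π^a_b`. -/
def Commutes : Prop := ∀ (a b c d : G) (r : R), P.π a (P.π c r d) b = P.π c (P.π a r b) d

/-- `π` is well-ordered: there is a well-order on `G` whose strict part `lt`
satisfies `π^a_b = 0` whenever `a ≺ b`. -/
def WellOrdered : Prop :=
  ∃ lt : G → G → Prop, IsWellOrder G lt ∧ ∀ a b : G, lt a b → ∀ r : R, P.π a r b = 0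

/-- The extension `π̃^a_b : S → S`, `π̃^a_b(Σ_c r_c x^c) = Σ_c π^a_b(r_c) x^c`. -/
noncomputable def ext (a b : G) (u : G →₀ R) : G →₀ R := u.sum fun c r => Finsupp.single c (P.π a r b)

/-- The commutator `[u,v] = uv - vu` in `S`. -/
noncomputable def commS (u v : G →₀ R) : G →₀ R := P.mul u v - P.mul v u

/-- The associator `(u,v,w) = (uv)w - u(vw)` in `S`. -/
noncomputable def assocS (u v w : G →₀ R) : G →₀ R := P.mul (P.mul u v) w - P.mul u (P.mul v w)

/-- The left nucleus `N_l(S)`. -/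
def Nl : Set (G →₀ R) := {u | ∀ v w, P.assocS u v w = 0}

/-- The middle nucleus `N_m(S)`. -/
def Nm : Set (G →₀ R) := {u | ∀ v w, P.assocS v u w = 0}

/-- The right nucleus `N_r(S)`. -/
def Nr : Set (G →₀ R) := {u | ∀ v w, P.assocS v w u = 0}

/-- The commuter `C(S)`. -/
def CS : Set (G →₀ R) := {u | ∀ v, P.mul u v = P.mul v u}

/-- The center `Z(S) = C(S) ∩ N_l(S) ∩ N_m(S) ∩ N_r(S)`. -/
def Z : Set (G →₀ R) := P.CS ∩ (P.Nl ∩ P.Nm ∩ P.Nr)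

/-- `Z(S)^G = {s ∈ Z(S) : π̃^a_b(s) = δ_{a,b} s}`. -/
def ZG : Set (G →₀ R) :=
  {s | s ∈ P.Z ∧ ∀ a b : G, P.ext a b s = if a = b then s else 0}

/-- `R` is `G`-simple: `{0}` and `R` are the only `G`-invariant ideals of `R`. -/
def RSimple : Prop :=
  ∀ J : Set R, IsIdealWith (· * ·) J → (∀ a b : G, ∀ r ∈ J, P.π a r b ∈ J) →
    J = {0} ∨ J = Set.univ

/-- `S` is `G`-simple: `{0}` and `S` are the only ideals of `S` invariant under all `π̃^a_b`. -/
def SSimple : Prop :=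
  ∀ J : Set (G →₀ R), IsIdealWith P.mul J → (∀ a b : G, ∀ u ∈ J, P.ext a b u ∈ J) →
    J = {0} ∨ J = Set.univ

end GDeriv

/-! For `0 ≠ z ∈ Z(S)^G` the set `zS` is a two-sided ideal because `z` is central, and it is
invariant under every `π̃^a_b` because `π̃^a_b(zu) = z π̃^a_b(u)`; by `G`-simplicity `zS = S`, so
`zw = 1` for some `w`. No associativity is needed to see that `w` is central: `z` is central
with `wz = 1`, so left multiplication by `z` is injective, and each identity defining the center
holds for `w` after multiplying it by `z`. Applying `π̃^a_b` to `zw = 1` and cancelling `z` shows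
that `w` is `π̃`-fixed. Over the commutative `Z(S)^G`, right linearity of `π̃^a_b` is the same as
left linearity. -/

namespace IsMulCentral

variable {M : Type*} [MulOneClass M] {z w : M}

theorem mul_left_cancel_of_mul_eq_one (hz : IsMulCentral z) (hzw : z * w = 1) {u v : M}
    (h : z * u = z * v) : u = v := by
  have hwz : w * z = 1 := (hz.comm w).eq ▸ hzw
  calc u = w * z * u := by rw [hwz, one_mul]
    _ = w * z * v := by rw [hz.mid_assoc, h, ← hz.mid_assoc]
    _ = v := by rw [hwz, one_mul]

theorem of_mul_eq_one (hz : IsMulCentral z) (hzw : z * w = 1) : IsMulCentral w where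
  comm a := hz.mul_left_cancel_of_mul_eq_one hzw <| by
    rw [hz.left_assoc, hzw, one_mul, hz.left_assoc, (hz.comm a).eq, hz.mid_assoc, hzw, mul_one]
  left_assoc b c := hz.mul_left_cancel_of_mul_eq_one hzw <| by
    simp only [hz.left_assoc, hzw, one_mul]
  right_assoc a b := hz.mul_left_cancel_of_mul_eq_one hzw <| by
    have hwz : w * z = 1 := (hz.comm w).eq ▸ hzw
    calc z * (a * b * w) = a * b * (w * z) := by rw [(hz.comm _).eq, hz.right_assoc]
      _ = a * (z * (b * w)) := by rw [hwz, hz.left_assoc, (hz.comm b).eq, hz.mid_assoc, hzw,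
            mul_one, mul_one]
      _ = z * (a * (b * w)) := by rw [← hz.mid_assoc, ← (hz.comm a).eq, ← hz.left_assoc]

end IsMulCentral

theorem isIdealWith_range_mul_left {S : Type*} [NonUnitalNonAssocRing S] {z : S}
    (hz : z ∈ Set.center S) : IsIdealWith (· * ·) (Set.range (z * ·)) where
  zero_mem := ⟨0, mul_zero z⟩
  add_mem := by
    rintro _ _ ⟨x, rfl⟩ ⟨y, rfl⟩
    exact ⟨x + y, mul_add z x y⟩
  neg_mem := by
    rintro _ ⟨x, rfl⟩
    exact ⟨-x, mul_neg z x⟩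
  mul_mem_left r := by
    rintro _ ⟨x, rfl⟩
    exact ⟨r * x, hz.left_comm r x⟩
  mul_mem_right := by
    rintro _ r ⟨x, rfl⟩
    exact ⟨x * r, hz.left_assoc x r⟩

namespace GDeriv

variable {R : Type*} [NonAssocRing R] {G : Type*} [Monoid G] (P : GDeriv R G)

theorem π_zero (a : G) : P.π a 0 = 0 := by
  simpa using P.d3 a 0 0

protected theorem zero_mul (v : G →₀ R) : P.mul 0 v = 0 := by
  simp [mul]

protected theorem mul_zero (u : G →₀ R) : P.mul u 0 = 0 := by
  simp [mul]

protected theorem add_mul (u v w : G →₀ R) : P.mul (u + v) w = P.mul u w + P.mul v w := by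
  refine Finsupp.sum_add_index' (by simp) fun a r₁ r₂ => ?_
  simp only [← Finsupp.sum_add, add_mul, Finsupp.single_add]

protected theorem mul_add (u v w : G →₀ R) : P.mul u (v + w) = P.mul u v + P.mul u w := by
  refine (Finsupp.sum_congr fun a _ => ?_).trans Finsupp.sum_add
  refine Finsupp.sum_add_index' (by simp [π_zero]) fun b s₁ s₂ => ?_
  rw [P.d3]
  exact Finsupp.sum_add_index' (by simp) fun c t₁ t₂ => by rw [mul_add, Finsupp.single_add]

protected theorem one_mul (u : G →₀ R) : P.mul P.one u = u := by
  rw [mul, one, Finsupp.sum_single_index (by simp)]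
  conv_rhs => rw [← Finsupp.sum_single u]
  refine Finsupp.sum_congr fun b _ => ?_
  rw [P.d1, Finsupp.sum_single_index (by simp), one_mul, one_mul]

protected theorem mul_one (u : G →₀ R) : P.mul u P.one = u := by
  rw [mul, one]
  conv_rhs => rw [← Finsupp.sum_single u]
  refine Finsupp.sum_congr fun a _ => ?_
  rw [Finsupp.sum_single_index (by simp [π_zero]), P.d2, Finsupp.sum_single_index (by simp),
    mul_one, mul_one]

/-- `R[G;π]` as a type of its own: `G →₀ R` already carries the pointwise product. -/
def OreRing (_P : GDeriv R G) : Type _ := G →₀ R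

noncomputable instance : AddCommGroup P.OreRing := inferInstanceAs (AddCommGroup (G →₀ R))

noncomputable instance : NonAssocRing P.OreRing where
  mul := P.mul
  one := P.one
  left_distrib := P.mul_add
  right_distrib := P.add_mul
  zero_mul := P.zero_mul
  mul_zero := P.mul_zero
  one_mul := P.one_mul
  mul_one := P.mul_one

theorem mem_Z_iff {u : G →₀ R} : u ∈ P.Z ↔ u ∈ Set.center P.OreRing where
  mp := fun ⟨hc, ⟨hl, _⟩, hr⟩ =>
    ⟨fun v => hc v, fun v w => (sub_eq_zero.mp (hl v w)).symm, fun v w => sub_eq_zero.mp (hr v w)⟩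
  mpr h := ⟨fun v => (h.comm v).eq,
    ⟨fun v w => sub_eq_zero.mpr (h.left_assoc v w).symm,
      fun v w => sub_eq_zero.mpr (h.mid_assoc v w)⟩,
    fun v w => sub_eq_zero.mpr (h.right_assoc v w)⟩

theorem ext_add (a b : G) (u v : G →₀ R) : P.ext a b (u + v) = P.ext a b u + P.ext a b v :=
  Finsupp.sum_add_index' (fun c => by simp [π_zero])
    fun c r s => by rw [P.d3, Finsupp.add_apply, Finsupp.single_add]

theorem ext_neg (a b : G) (u : G →₀ R) : P.ext a b (-u) = -P.ext a b u :=
  map_neg (AddMonoidHom.mk' (P.ext a b) (P.ext_add a b)) u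

theorem ext_one (a b : G) : P.ext a b P.one = if a = b then P.one else 0 := by
  rw [ext, one, Finsupp.sum_single_index (by simp [π_zero]), P.d2, Finsupp.single_apply]
  split_ifs <;> simp

def ExtLeftLinear (V : Set (G →₀ R)) : Prop :=
  ∀ a b : G, ∀ v ∈ V, ∀ u : G →₀ R, P.ext a b (P.mul v u) = P.mul v (P.ext a b u)

def ExtRightLinear (V : Set (G →₀ R)) : Prop :=
  ∀ a b : G, ∀ u : G →₀ R, ∀ v ∈ V, P.ext a b (P.mul u v) = P.mul (P.ext a b u) v

theorem ExtRightLinear.extLeftLinear {P : GDeriv R G} {V : Set (G →₀ R)}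
    (h : P.ExtRightLinear V) (hV : V ⊆ P.CS) : P.ExtLeftLinear V := by
  intro a b v hv u
  rw [hV hv u, h a b u v hv, hV hv]

theorem one_mem_ZG : P.one ∈ P.ZG :=
  ⟨P.mem_Z_iff.mpr Set.one_mem_center, P.ext_one⟩

theorem add_mem_ZG {x y : G →₀ R} (hx : x ∈ P.ZG) (hy : y ∈ P.ZG) : x + y ∈ P.ZG := by
  refine ⟨P.mem_Z_iff.mpr (Set.add_mem_center (P.mem_Z_iff.mp hx.1) (P.mem_Z_iff.mp hy.1)),
    fun a b => ?_⟩
  rw [ext_add, hx.2, hy.2]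
  split_ifs <;> simp

theorem neg_mem_ZG {x : G →₀ R} (hx : x ∈ P.ZG) : -x ∈ P.ZG := by
  refine ⟨P.mem_Z_iff.mpr (Set.neg_mem_center (M := P.OreRing) (P.mem_Z_iff.mp hx.1)),
    fun a b => ?_⟩
  rw [ext_neg, hx.2]
  split_ifs <;> simp

theorem mul_mem_ZG (hL : P.ExtLeftLinear P.ZG) {x y : G →₀ R} (hx : x ∈ P.ZG) (hy : y ∈ P.ZG) :
    P.mul x y ∈ P.ZG := by
  refine ⟨P.mem_Z_iff.mpr
    (Set.mul_mem_center (M := P.OreRing) (P.mem_Z_iff.mp hx.1) (P.mem_Z_iff.mp hy.1)),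
    fun a b => ?_⟩
  rw [hL a b x hx y, hy.2]
  split_ifs
  exacts [rfl, P.mul_zero x]

theorem exists_mul_eq_one_of_mem_ZG (hS : P.SSimple) (hL : P.ExtLeftLinear P.ZG)
    {z : G →₀ R} (hz : z ∈ P.ZG) (hz0 : z ≠ 0) : ∃ w, P.mul z w = P.one := by
  have hideal : IsIdealWith P.mul (Set.range (P.mul z)) :=
    isIdealWith_range_mul_left (S := P.OreRing) (P.mem_Z_iff.mp hz.1)
  have hinv : ∀ a b : G, ∀ u ∈ Set.range (P.mul z), P.ext a b u ∈ Set.range (P.mul z) := by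
    rintro a b _ ⟨x, rfl⟩
    exact ⟨P.ext a b x, (hL a b z hz x).symm⟩
  rcases hS _ hideal hinv with h0 | huniv
  · exact absurd (h0 ▸ ⟨P.one, P.mul_one z⟩ : z ∈ ({0} : Set (G →₀ R))) hz0
  · exact Set.eq_univ_iff_forall.mp huniv P.one

theorem exists_inv_mem_ZG (hS : P.SSimple) (hL : P.ExtLeftLinear P.ZG)
    {z : G →₀ R} (hz : z ∈ P.ZG) (hz0 : z ≠ 0) :
    ∃ w ∈ P.ZG, P.mul z w = P.one ∧ P.mul w z = P.one := by
  obtain ⟨w, hzw⟩ := P.exists_mul_eq_one_of_mem_ZG hS hL hz hz0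
  have hzc : z ∈ Set.center P.OreRing := P.mem_Z_iff.mp hz.1
  refine ⟨w, ⟨P.mem_Z_iff.mpr (hzc.of_mul_eq_one hzw),
    fun a b => hzc.mul_left_cancel_of_mul_eq_one hzw ?_⟩, hzw, (hzc.comm w).eq.symm.trans hzw⟩
  calc P.mul z (P.ext a b w) = P.ext a b (P.mul z w) := (hL a b z hz w).symm
    _ = if a = b then P.one else 0 := by rw [hzw, P.ext_one]
    _ = P.mul z (if a = b then w else 0) := by split_ifs <;> simp [hzw, P.mul_zero]

end GDeriv

/-- If `S` is `G`-simple and every extended map `π̃^a_b` is right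
`Z(S)^G`-linear (or every `π̃^a_b` is left `Z(S)^G`-linear), then `Z(S)^G` is a
field. -/
theorem stmt9 {R : Type*} [NonAssocRing R] {G : Type*} [Monoid G]
    (P : GDeriv R G) (h : P.SSimple)
    (hlin :
      (∀ a b : G, ∀ u : G →₀ R, ∀ v ∈ P.ZG,
        P.ext a b (P.mul u v) = P.mul (P.ext a b u) v) ∨
      (∀ a b : G, ∀ v ∈ P.ZG, ∀ u : G →₀ R,
        P.ext a b (P.mul v u) = P.mul v (P.ext a b u))) :
    IsFieldWith P.mul P.one P.ZG := by
  have hL : P.ExtLeftLinear P.ZG :=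
    hlin.elim (fun hR => (show P.ExtRightLinear P.ZG from hR).extLeftLinear fun _ hs => hs.1.1) id
  exact ⟨P.one_mem_ZG, fun _ hx _ hy => P.add_mem_ZG hx hy, fun _ hx => P.neg_mem_ZG hx,
    fun _ hx _ hy => P.mul_mem_ZG hL hx hy, fun _ hx y _ => hx.1.1 y,
    fun _ hz hz0 => P.exists_inv_mem_ZG h hL hz hz0⟩
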